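/- arXiv:2312.04239 — 3 statements merged into one kernel-verified Lean document; each statement's English description precedes it below -/
import Mathlib

section
/- Let $\Sigma \subset \mathbb{R}^n$ be a complete smooth fan with rays $\rho_1,\ldots,\rho_d$, and let $X \subset \mathbb{C}^d$ be the affine variety cut out by the Stanley-Reisner ideal $SR(\Sigma)$. Then the common vanishing locus on $X$ of the linear forms $\ell_k = \sum_{i=1}^d \langle \rho_i, e^k\rangle z_i$, $k=1,\ldots,n$, is exactly the origin $\{0\}$. -/
open Finset

/-- Data of a complete smooth fan `Σ ⊆ ℝⁿ` (see the paper): primitive ray generators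
`ray : Fin d → ℤⁿ` and the collection of maximal cones, each given by the set of
indices of its generating rays.  Smoothness: the rays of each maximal cone form a
`ℤ`-basis of `ℤⁿ`.  Completeness: every point of `ℝⁿ` lies in the cone spanned by
the rays of some maximal cone. -/
structure CompleteSmoothFan (n d : ℕ) where
  ray : Fin d → Fin n → ℤ
  maxCones : Finset (Finset (Fin d))
  card_eq : ∀ σ ∈ maxCones, σ.card = n
  smooth : ∀ σ ∈ maxCones,
    LinearIndependent ℤ (fun i : {i // i ∈ σ} => ray i.1) ∧
    Submodule.span ℤ (Set.range fun i : {i // i ∈ σ} => ray i.1) = ⊤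
  complete : ∀ x : Fin n → ℝ, ∃ σ ∈ maxCones, ∃ c : Fin d → ℝ,
    (∀ i, 0 ≤ c i) ∧ (∀ i, i ∉ σ → c i = 0) ∧
    x = ∑ i, c i • fun j => (ray i j : ℝ)

/-- The union of coordinate subspaces `X = V(SR(Σ)) ⊆ ℂ^d`: the union over maximal
cones `σ` of the coordinate subspaces `ℂ^σ = {z : zᵢ = 0 whenever ρᵢ ∉ σ}`. -/
def CompleteSmoothFan.X {n d : ℕ} (F : CompleteSmoothFan n d) :
    Set (Fin d → ℂ) :=
  { z | ∃ σ ∈ F.maxCones, ∀ i, i ∉ σ → z i = 0 }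

/-- **The common zero locus of the linear forms on `X` is the origin.**
For a complete smooth fan `Σ` with rays `ρ₁,…,ρ_d`, the common vanishing locus on
`X = V(SR(Σ))` of the linear forms `ℓ_k = ∑ᵢ ⟨ρᵢ, eᵏ⟩ zᵢ`, `k = 1,…,n`,
is exactly the origin. -/
theorem common_zeros_of_linear_forms_eq_origin
    (n d : ℕ) (F : CompleteSmoothFan n d) :
    { z | z ∈ F.X ∧ ∀ k : Fin n, ∑ i, ((F.ray i k : ℤ) : ℂ) * z i = 0 }
      = ({0} : Set (Fin d → ℂ)) := by
  ext z
  simp only [Set.mem_setOf_eq, Set.mem_singleton_iff, CompleteSmoothFan.X]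
  constructor
  · rintro ⟨⟨σ, hσ, hz⟩, hlin⟩
    set v : {i // i ∈ σ} → (Fin n → ℂ) := fun i k => ((F.ray i.1 k : ℤ) : ℂ) with hv
    have hcard : Fintype.card {i // i ∈ σ} = n := by
      simp [Fintype.card_coe, F.card_eq σ hσ]
    have hspanZ := (F.smooth σ hσ).2
    let f : (Fin n → ℤ) →ₗ[ℤ] (Fin n → ℂ) :=
      { toFun := fun x k => ((x k : ℤ) : ℂ)
        map_add' := by intro a b; funext k; push_cast; simp
        map_smul' := by intro m a; funext k; push_cast; simp }
    have htop : ⊤ ≤ Submodule.span ℂ (Set.range v) := by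
      rw [← (Pi.basisFun ℂ (Fin n)).span_eq]
      apply Submodule.span_le.2
      rintro _ ⟨j, rfl⟩
      have h1 : (Pi.basisFun ℤ (Fin n)) j ∈
          Submodule.span ℤ (Set.range fun i : {i // i ∈ σ} => F.ray i.1) := by
        rw [hspanZ]; trivial
      have h2 : f ((Pi.basisFun ℤ (Fin n)) j) ∈
          Submodule.map f (Submodule.span ℤ (Set.range fun i : {i // i ∈ σ} => F.ray i.1)) :=
        ⟨_, h1, rfl⟩
      rw [Submodule.map_span] at h2
      have himg : f '' (Set.range fun i : {i // i ∈ σ} => F.ray i.1) = Set.range v := by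
        rw [← Set.range_comp]; rfl
      rw [himg] at h2
      have h3 : f ((Pi.basisFun ℤ (Fin n)) j) = (Pi.basisFun ℂ (Fin n)) j := by
        funext k
        simp [f, Pi.basisFun_apply, Pi.single_apply]
      rw [h3] at h2
      exact Submodule.span_le_restrictScalars ℤ ℂ (Set.range v) h2
    have hli : LinearIndependent ℂ v :=
      linearIndependent_of_top_le_span_of_card_eq_finrank htop
        (by simp [hcard])
    have hzero : ∀ i : {i // i ∈ σ}, z i.1 = 0 := by
      have := Fintype.linearIndependent_iff.1 hli (fun i => z i.1) ?_
      · exact this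
      · funext k
        have hsum : ∑ i : {i // i ∈ σ}, z i.1 * ((F.ray i.1 k : ℤ) : ℂ)
            = ∑ i, ((F.ray i k : ℤ) : ℂ) * z i := by
          rw [Finset.sum_coe_sort σ (fun i => z i * ((F.ray i k : ℤ) : ℂ))]
          calc ∑ i ∈ σ, z i * ((F.ray i k : ℤ) : ℂ)
              = ∑ i ∈ σ, ((F.ray i k : ℤ) : ℂ) * z i :=
                Finset.sum_congr rfl (fun i _ => mul_comm _ _)
            _ = ∑ i, ((F.ray i k : ℤ) : ℂ) * z i :=
                Finset.sum_subset (Finset.subset_univ σ)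
                  (fun i _ hi => by simp [hz i hi])
        have := hlin k
        simp only [Finset.sum_apply, Pi.smul_apply, smul_eq_mul]
        calc ∑ i : {i // i ∈ σ}, z i.1 * v i k
            = ∑ i, ((F.ray i k : ℤ) : ℂ) * z i := hsum
          _ = 0 := hlin k
    funext i
    by_cases h : i ∈ σ
    · exact hzero ⟨i, h⟩
    · exact hz i h
  · rintro rfl
    obtain ⟨σ, hσ, -⟩ := F.complete 0
    refine ⟨⟨σ, hσ, fun i _ => rfl⟩, fun k => by simp⟩
end

section
/- Let $(E, D)$ be a complex of modules and let $V$ be an odd operator on a subspace $U \subseteq E$ stable under $D$ and $V$ such that $[D, V] = 1 + N$ on $U$, where $N$ is an operator commuting with $D$ and $1+N$ is invertible with inverse $(1+N)^{-1}$ commuting with $D$ and $V$. Let $\rho$ be an even degree-$0$ operator on $E$ such that $(1-\rho)E \subseteq U$ and $[D,\rho]$ maps $E$ into $U$. Define $T := \rho + [D,\rho]\, V (1+N)^{-1}$ and $R := (1-\rho)\, V (1+N)^{-1}$. Then $[D, R] = 1 - T$; consequently $T$ is chain homotopic to the identity. -/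
/-- **The abstract homotopy identity `[D, R] = 1 - T`.**
`E` is the module of global polyvector fields, `U` the module of sections over the
open dense locus (with `res` the restriction map), `D` the differential
(`∂̄_f` downstairs, `D_U` its restriction), and `V` an odd operator on `U` with
`[D, V] = 1 + N` (graded commutator), `N` commuting with `D`, and `1 + N`
invertible with inverse `G` commuting with `D` and `V`.  The even degree-`0`
operator `ρ` (multiplication by a cutoff function) is such that multiplication by
`1 - ρ` and by `[D, ρ]` carry sections over `U` to global sections
(`mulOneSubRho`, `mulDRho`), with the Leibniz compatibility `hder`.
Setting `T = ρ + [D,ρ] V (1+N)⁻¹` and `R = (1-ρ) V (1+N)⁻¹`, one has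
`[D, R] = 1 - T`; consequently `T` is chain homotopic to the identity. -/
theorem homotopy_identity_cutoff
    {E U : Type*} [AddCommGroup E] [Module ℂ E] [AddCommGroup U] [Module ℂ U]
    (res : E →ₗ[ℂ] U)
    (DE : Module.End ℂ E) (DU V N G : Module.End ℂ U)
    (hres : res ∘ₗ DE = DU ∘ₗ res)
    (hDV : DU ∘ₗ V + V ∘ₗ DU = 1 + N)
    (hND : N ∘ₗ DU = DU ∘ₗ N)
    (hG1 : G ∘ₗ (1 + N) = 1) (hG2 : (1 + N) ∘ₗ G = 1)
    (hGD : G ∘ₗ DU = DU ∘ₗ G) (hGV : G ∘ₗ V = V ∘ₗ G)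
    (ρ : Module.End ℂ E)
    (mulOneSubRho mulDRho : U →ₗ[ℂ] E)
    (h1 : ∀ x : E, mulOneSubRho (res x) = x - ρ x)
    (h2 : ∀ x : E, mulDRho (res x) = DE (ρ x) - ρ (DE x))
    (hder : ∀ u : U, DE (mulOneSubRho u) = - mulDRho u + mulOneSubRho (DU u)) :
    DE ∘ₗ (mulOneSubRho ∘ₗ V ∘ₗ G ∘ₗ res)
      + (mulOneSubRho ∘ₗ V ∘ₗ G ∘ₗ res) ∘ₗ DE
      = 1 - (ρ + mulDRho ∘ₗ V ∘ₗ G ∘ₗ res) := by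
  ext x
  have hres' : res (DE x) = DU (res x) := congrFun (congrArg DFunLike.coe hres) x
  have hcomm : V (G (DU (res x))) = V (DU (G (res x))) := by
    have := congrFun (congrArg DFunLike.coe hGD) (res x)
    simp only [LinearMap.comp_apply] at this
    rw [← this]
  have hkey := congrFun (congrArg DFunLike.coe hDV) (G (res x))
  simp only [LinearMap.add_apply, LinearMap.comp_apply, Module.End.one_apply] at hkey
  have hG := congrFun (congrArg DFunLike.coe hG2) (res x)
  simp only [LinearMap.comp_apply, LinearMap.add_apply, Module.End.one_apply] at hG
  have hGDV : DU (V (G (res x))) + V (G (DU (res x))) = res x := by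
    rw [hcomm, hkey, hG]
  simp only [LinearMap.add_apply, LinearMap.comp_apply, LinearMap.sub_apply,
    Module.End.one_apply, hder, hres']
  have h3 := congrArg mulOneSubRho hGDV
  rw [map_add, h1] at h3
  linear_combination (norm := abel) h3
end

section
/- Let $K : \mathcal{H} \times \mathcal{H} \to R[[u]]$ be a pairing on a free $R[[u]]$-module satisfying sesquilinearity $K(g(u)s_1, s_2) = K(s_1, g(-u)s_2) = g(u)K(s_1,s_2)$ and flatness $v\,K(s_1,s_2) = K(\nabla_v s_1, s_2) + K(s_1, \nabla_v s_2)$ for a connection $\nabla$, where for each base vector field $v$ the operator $u\nabla_v$ preserves a sub-$\mathbb{C}$-span $W = \mathrm{span}(\varphi_1,\ldots,\varphi_\mu)$ and acts on $W$ by a nilpotent matrix $N_v \in \mathbb{C}^{\mu\times\mu}$, with $(\nabla^{(0)})^2 = 0$. If sections $s_i = DE(\varphi_i)$ satisfy $\nabla_v DE = DE \circ \nabla_v^{(0)}$ and $DE(\varphi_i) \equiv \varphi_i$ modulo the maximal ideal, and $K(\varphi_i,\varphi_j) \in \mathbb{C}$ at the central fiber, then $K(DE(\varphi_i), DE(\varphi_j))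 = K(\varphi_i, \varphi_j) \in \mathbb{C}$ identically. -/
noncomputable section

/-- The coefficient ring `R̂[[u]]` of the formal neighborhood: formal power series in
the base variables `t₁,…,t_s` with coefficients in `ℂ[[u]]`. -/
abbrev FormalBase (s : ℕ) := MvPowerSeries (Fin s) (PowerSeries ℂ)

/-- The formal partial derivative `∂/∂tᵢ` on `R̂[[u]]`. -/
def tDeriv {s : ℕ} (i : Fin s) (h : FormalBase s) : FormalBase s :=
  fun m => (m i + 1 : ℕ) • h (m + Finsupp.single i 1)

/-- Multiplication by the variable `u` on `R̂[[u]]`. -/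
def uMul {s : ℕ} (h : FormalBase s) : FormalBase s :=
  fun m => PowerSeries.X * h m

/-- Multiplication by a complex constant on `R̂[[u]]`. -/
def cMul {s : ℕ} (c : ℂ) (h : FormalBase s) : FormalBase s :=
  fun m => PowerSeries.C c * h m

lemma FormalBase.sum_apply {s μ : ℕ} (f : Fin μ → FormalBase s) (m : Fin s →₀ ℕ) :
    (∑ c, f c) m = ∑ c, f c m :=
  map_sum (MvPowerSeries.coeff (R := PowerSeries ℂ) m) f Finset.univ

lemma FormalBase.sub_apply {s : ℕ} (f g : FormalBase s) (m : Fin s →₀ ℕ) :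
    (f - g) m = f m - g m :=
  map_sub (MvPowerSeries.coeff (R := PowerSeries ℂ) m) f g

/-- **Constancy of the higher residue pairing on Deligne-extended sections.**
Let `H a b = K_F(DE(φ_a), DE(φ_b))` be the matrix of pairings of the flat
(Deligne-extended) sections, with values in `R̂[[u]]`.  Flatness of the pairing,
the intertwining `∇_v ∘ DE = DE ∘ ∇_v^{(0)}`, and sesquilinearity combine into the
ODE `u ∂_i H = N_iᵀ H - H N_i`, where the residue matrices `N_i` are nilpotent
(and commute, by flatness `(∇^{(0)})² = 0`).  If at the central fiber `H` is a
complex constant (i.e. `K_f(φ_a, φ_b) ∈ ℂ`), then `H` is constant over the whole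
formal base: all coefficients of `H a b` at nonzero monomials vanish, so that
`K_F(DE(φ_a), DE(φ_b)) = K_f(φ_a, φ_b) ∈ ℂ` identically. -/
theorem pairing_of_deligne_extension_constant
    (s μ : ℕ) (N : Fin s → Matrix (Fin μ) (Fin μ) ℂ)
    (hnil : ∀ i, IsNilpotent (N i))
    (hcomm : ∀ i j, N i * N j = N j * N i)
    (H : Fin μ → Fin μ → FormalBase s)
    (hflat : ∀ (i : Fin s) (a b : Fin μ),
      uMul (tDeriv i (H a b))
        = (∑ c : Fin μ, cMul (N i c a) (H c b))
          - (∑ c : Fin μ, cMul (N i c b) (H a c)))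
    (hinit : ∀ a b : Fin μ, ∃ cst : ℂ, H a b 0 = PowerSeries.C cst) :
    ∀ (a b : Fin μ) (m : Fin s →₀ ℕ), m ≠ 0 → H a b m = 0 := by
  have deg_zero : ∀ m : Fin s →₀ ℕ, (m.sum fun _ k => k) = 0 → m = 0 := by
    intro m hm
    ext j
    by_contra h
    have hj : j ∈ m.support := Finsupp.mem_support_iff.mpr h
    exact h (Finset.sum_eq_zero_iff.mp hm j hj)
  have key : ∀ n : ℕ, ∀ m : Fin s →₀ ℕ, (m.sum fun _ k => k) = n →
      ∀ a b : Fin μ, (PowerSeries.X : PowerSeries ℂ) ^ n * H a b m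
        ∈ (PowerSeries.C (R := ℂ)).range := by
    intro n
    induction n with
    | zero =>
      intro m hm a b
      have hm0 := deg_zero m hm
      subst hm0
      obtain ⟨c, hc⟩ := hinit a b
      exact ⟨c, by simp [hc]⟩
    | succ n ih =>
      intro m hm a b
      obtain ⟨i, hi⟩ : ∃ i, m i ≠ 0 := by
        by_contra h
        push_neg at h
        have hm0 : m = 0 := by ext j; exact h j
        rw [hm0] at hm
        simp at hm
      set m' := m - Finsupp.single i 1 with hm'def
      have hle : Finsupp.single i 1 ≤ m := by
        rw [Finsupp.single_le_iff]; omega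
      have hmeq : m' + Finsupp.single i 1 = m := tsub_add_cancel_of_le hle
      have hdeg : (m'.sum fun _ k => k) = n := by
        have h1 : ((m' + Finsupp.single i 1).sum fun _ k => k)
            = (m'.sum fun _ k => k) + ((Finsupp.single i 1).sum fun _ k => k) :=
          Finsupp.sum_add_index' (fun _ => rfl) (fun _ _ _ => rfl)
        rw [hmeq, hm] at h1
        rw [Finsupp.sum_single_index rfl] at h1
        omega
      -- the ODE at the monomial m'
      have hode : PowerSeries.X * ((m' i + 1 : ℕ) • H a b m)
          = (∑ c, PowerSeries.C (N i c a) * H c b m')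
            - (∑ c, PowerSeries.C (N i c b) * H a c m') := by
        have h0 := congrFun (hflat i a b) m'
        have hL : uMul (tDeriv i (H a b)) m'
            = PowerSeries.X * ((m' i + 1 : ℕ) • H a b m) := by
          simp only [uMul, tDeriv, hmeq]
        have hR : ((∑ c : Fin μ, cMul (N i c a) (H c b))
              - (∑ c : Fin μ, cMul (N i c b) (H a c))) m'
            = (∑ c, PowerSeries.C (N i c a) * H c b m')
              - (∑ c, PowerSeries.C (N i c b) * H a c m') := by
          rw [FormalBase.sub_apply, FormalBase.sum_apply, FormalBase.sum_apply]
          rfl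
        rw [hL] at h0
        rw [hR] at h0
        exact h0
      -- scaled membership
      have hmem : ((m' i + 1 : ℕ) : ℂ) • ((PowerSeries.X : PowerSeries ℂ) ^ (n + 1) * H a b m)
          ∈ (PowerSeries.C (R := ℂ)).range := by
        have hcalc : ((m' i + 1 : ℕ) : ℂ) • ((PowerSeries.X : PowerSeries ℂ) ^ (n + 1) * H a b m)
            = (∑ c, PowerSeries.C (N i c a) * (PowerSeries.X ^ n * H c b m'))
              - (∑ c, PowerSeries.C (N i c b) * (PowerSeries.X ^ n * H a c m')) := by
          have : ((m' i + 1 : ℕ) : ℂ) • ((PowerSeries.X : PowerSeries ℂ) ^ (n + 1) * H a b m)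
              = PowerSeries.X ^ n * (PowerSeries.X * ((m' i + 1 : ℕ) • H a b m)) := by
            rw [Nat.cast_smul_eq_nsmul, mul_smul_comm, mul_smul_comm, pow_succ,
              mul_assoc]
          rw [this, hode, mul_sub, Finset.mul_sum, Finset.mul_sum]
          congr 1 <;> (apply Finset.sum_congr rfl; intro c _; ring)
        rw [hcalc]
        refine sub_mem (Subring.sum_mem _ fun c _ => ?_) (Subring.sum_mem _ fun c _ => ?_)
        · exact Subring.mul_mem _ ⟨_, rfl⟩ (ih m' hdeg c b)
        · exact Subring.mul_mem _ ⟨_, rfl⟩ (ih m' hdeg a c)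
      obtain ⟨c, hc⟩ := hmem
      have hk : ((m' i + 1 : ℕ) : ℂ) ≠ 0 := by
        exact_mod_cast Nat.succ_ne_zero (m' i)
      refine ⟨((m' i + 1 : ℕ) : ℂ)⁻¹ * c, ?_⟩
      have := congrArg (fun x => ((m' i + 1 : ℕ) : ℂ)⁻¹ • x) hc
      beta_reduce at this
      rw [smul_smul, inv_mul_cancel₀ hk, one_smul] at this
      rw [← this, map_mul]
      rw [Algebra.smul_def]
      rfl
  intro a b m hm
  set n := (m.sum fun _ k => k) with hn
  have hpos : n ≠ 0 := by
    intro h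
    exact hm (deg_zero m (by rw [← hn]; exact h))
  obtain ⟨c, hc⟩ := key n m hn.symm a b
  have hc0 : c = 0 := by
    have h1 := congrArg (PowerSeries.constantCoeff (R := ℂ)) hc
    rw [map_mul, map_pow, PowerSeries.constantCoeff_X, zero_pow hpos, zero_mul,
      PowerSeries.constantCoeff_C] at h1
    exact h1
  rw [hc0, map_zero] at hc
  have hXn : (PowerSeries.X : PowerSeries ℂ) ^ n ≠ 0 :=
    pow_ne_zero _ PowerSeries.X_ne_zero
  rcases mul_eq_zero.mp hc.symm with h | h
  · exact absurd h hXn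
  · exact h
end
end
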